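/- arXiv:2506.16394 — 3 statements merged into one kernel-verified Lean document; each statement's English description precedes it below -/
import Mathlib

section
/- Let $R_K$ be the $(K-1)\times K$ successive differences matrix and let $\Lambda = \mathrm{diag}(\lambda_1^2,\ldots,\lambda_K^2)$ with $\lambda_k^2 > 0$ for all $k$. Then for any vector $\theta \in \mathbb{R}^K$, $\theta^\top R_K^\top (R_K \Lambda R_K^\top)^{-1} R_K \theta = \sum_{1\leq k_1 < k_2 \leq K} (\theta_{k_1} - \theta_{k_2})^2 \cdot \frac{\lambda_{k_1}^{-2}\lambda_{k_2}^{-2}}{\sum_{l=1}^K \lambda_l^{-2}}$. -/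
open Matrix Finset

/-- The `(K-1) × K` successive-differences matrix. -/
def diffMatrix (K : ℕ) : Matrix (Fin (K - 1)) (Fin K) ℝ :=
  fun i j => if j.val = i.val then 1 else if j.val = i.val + 1 then -1 else 0

namespace WaldAux

def a0 {K : ℕ} (i : Fin (K - 1)) : Fin K := ⟨i.1, by have := i.2; omega⟩
def a1 {K : ℕ} (i : Fin (K - 1)) : Fin K := ⟨i.1 + 1, by have := i.2; omega⟩

lemma diff_apply {K : ℕ} (i : Fin (K - 1)) (j : Fin K) :
    diffMatrix K i j = (if j = a0 i then (1 : ℝ) else 0) + (if j = a1 i then (-1 : ℝ) else 0) := by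
  simp only [diffMatrix, a0, a1, Fin.ext_iff]
  split_ifs <;> (first | omega | norm_num)

lemma diff_row_sum {K : ℕ} (i : Fin (K - 1)) : ∑ j, diffMatrix K i j = 0 := by
  simp [diff_apply, Finset.sum_add_distrib, Finset.sum_ite_eq']

lemma diff_mulVec {K : ℕ} (y : Fin K → ℝ) (i : Fin (K - 1)) :
    (diffMatrix K).mulVec y i = y (a0 i) - y (a1 i) := by
  simp [Matrix.mulVec, dotProduct, diff_apply, add_mul, ite_mul,
    Finset.sum_add_distrib, Finset.sum_ite_eq']
  ring

lemma ker_const {K : ℕ} (y : Fin K → ℝ) (h : ∀ i : Fin (K - 1), y (a0 i) = y (a1 i))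
    (k k' : Fin K) : y k = y k' := by
  have hK : 0 < K := k.pos
  have main : ∀ n (hn : n < K), y ⟨n, hn⟩ = y ⟨0, hK⟩ := by
    intro n
    induction n with
    | zero => intro hn; rfl
    | succ m ih =>
      intro hn
      have hm : m < K - 1 := by omega
      have := h ⟨m, hm⟩
      have e1 : a0 (⟨m, hm⟩ : Fin (K - 1)) = ⟨m, by omega⟩ := rfl
      have e2 : a1 (⟨m, hm⟩ : Fin (K - 1)) = ⟨m + 1, hn⟩ := rfl
      rw [e1, e2] at this
      rw [← this, ih]
  have h1 := main k.1 k.2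
  have h2 := main k'.1 k'.2
  simp only [Fin.eta] at h1 h2
  rw [h1, h2]

end WaldAux

namespace WaldAux

lemma sum_if_a0 {K : ℕ} (x : Fin (K - 1) → ℝ) (j : Fin K) :
    ∑ i, (if j = a0 i then x i else 0) =
      if h : j.1 < K - 1 then x ⟨j.1, h⟩ else 0 := by
  by_cases h : j.1 < K - 1
  · rw [dif_pos h, Finset.sum_eq_single ⟨j.1, h⟩]
    · rw [if_pos]; exact Fin.ext rfl
    · intro i _ hi
      rw [if_neg]
      intro hj
      have hv : j.1 = i.1 := congrArg Fin.val hj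
      exact hi (Fin.ext hv.symm)
    · intro hu; exact absurd (Finset.mem_univ _) hu
  · rw [dif_neg h]
    apply Finset.sum_eq_zero
    intro i _
    rw [if_neg]
    intro hj
    have hv : j.1 = i.1 := congrArg Fin.val hj
    exact h (hv ▸ i.2)

lemma sum_if_a1 {K : ℕ} (x : Fin (K - 1) → ℝ) (j : Fin K) :
    ∑ i, (if j = a1 i then x i else 0) =
      if h : 1 ≤ j.1 then x ⟨j.1 - 1, by have := j.2; omega⟩ else 0 := by
  by_cases h : 1 ≤ j.1
  · rw [dif_pos h, Finset.sum_eq_single ⟨j.1 - 1, by have := j.2; omega⟩]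
    · rw [if_pos]
      apply Fin.ext
      show j.1 = j.1 - 1 + 1
      omega
    · intro i _ hi
      rw [if_neg]
      intro hj
      have hv : j.1 = i.1 + 1 := congrArg Fin.val hj
      apply hi
      apply Fin.ext
      show i.1 = j.1 - 1
      omega
    · intro hu; exact absurd (Finset.mem_univ _) hu
  · rw [dif_neg h]
    apply Finset.sum_eq_zero
    intro i _
    rw [if_neg]
    intro hj
    have hv : j.1 = i.1 + 1 := congrArg Fin.val hj
    omega

lemma diff_vecMul {K : ℕ} (x : Fin (K - 1) → ℝ) (j : Fin K) :
    Matrix.vecMul x (diffMatrix K) j =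
      (if h : j.1 < K - 1 then x ⟨j.1, h⟩ else 0) -
        (if h : 1 ≤ j.1 then x ⟨j.1 - 1, by have := j.2; omega⟩ else 0) := by
  rw [← sum_if_a0, ← sum_if_a1, ← Finset.sum_sub_distrib]
  simp only [Matrix.vecMul, dotProduct]
  apply Finset.sum_congr rfl
  intro i _
  rw [diff_apply]
  split_ifs <;> ring

lemma diff_vecMul_injective {K : ℕ} (x : Fin (K - 1) → ℝ)
    (h : ∀ j, Matrix.vecMul x (diffMatrix K) j = 0) : ∀ i, x i = 0 := by
  have main : ∀ n (hn : n < K - 1), x ⟨n, hn⟩ = 0 := by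
    intro n
    induction n with
    | zero =>
      intro hn
      have h0 := h ⟨0, by omega⟩
      rw [diff_vecMul] at h0
      rw [dif_pos hn, dif_neg (by norm_num)] at h0
      simpa using h0
    | succ m ih =>
      intro hn
      have h0 := h ⟨m + 1, by omega⟩
      rw [diff_vecMul] at h0
      rw [dif_pos hn, dif_pos (by omega : 1 ≤ m + 1)] at h0
      have hx : x ⟨m + 1 - 1, by omega⟩ = 0 := ih (by omega)
      rw [hx] at h0
      simpa using h0
  intro i
  have := main i.1 i.2
  simpa using this

end WaldAux

namespace WaldAux

lemma isUnit_A_det {K : ℕ} (l : Fin K → ℝ) (hl : ∀ k, 0 < l k) :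
    IsUnit (diffMatrix K * Matrix.diagonal l * (diffMatrix K)ᵀ).det := by
  set R := diffMatrix K with hR
  rw [← Matrix.isUnit_iff_isUnit_det, ← Matrix.mulVec_injective_iff_isUnit]
  have key : ∀ z : Fin (K - 1) → ℝ,
      (R * Matrix.diagonal l * Rᵀ).mulVec z = 0 → z = 0 := by
    intro z hz
    have hy : ∀ k, Matrix.vecMul z R k = 0 := by
      have h1 : z ⬝ᵥ (R * Matrix.diagonal l * Rᵀ).mulVec z = 0 := by
        rw [hz]; simp
      have h2 : z ⬝ᵥ (R * Matrix.diagonal l * Rᵀ).mulVec z =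
          ∑ k, l k * (Matrix.vecMul z R k) ^ 2 := by
        rw [Matrix.mul_assoc, ← Matrix.mulVec_mulVec, Matrix.dotProduct_mulVec,
          ← Matrix.mulVec_mulVec, Matrix.mulVec_transpose]
        simp [dotProduct, Matrix.mulVec_diagonal]
        apply Finset.sum_congr rfl
        intro k _
        ring
      rw [h1] at h2
      intro k
      have hnn : ∀ k ∈ Finset.univ, 0 ≤ l k * (Matrix.vecMul z R k) ^ 2 := by
        intro k _
        exact mul_nonneg (hl k).le (sq_nonneg _)
      have := (Finset.sum_eq_zero_iff_of_nonneg hnn).mp h2.symm k (Finset.mem_univ k)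
      have hlk := (hl k).ne'
      have hsq : (Matrix.vecMul z R k) ^ 2 = 0 := by
        rcases mul_eq_zero.mp this with h | h
        · exact absurd h hlk
        · exact h
      exact pow_eq_zero_iff (by norm_num) |>.mp hsq
    funext i
    exact diff_vecMul_injective z hy i
  intro x y hxy
  have : (R * Matrix.diagonal l * Rᵀ).mulVec (x - y) = 0 := by
    rw [Matrix.mulVec_sub, hxy, sub_self]
  have := key _ this
  exact sub_eq_zero.mp this

end WaldAux

namespace WaldAux

noncomputable def Mmat {K : ℕ} (l : Fin K → ℝ) : Matrix (Fin K) (Fin K) ℝ :=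
  fun k m => (if k = m then (l k)⁻¹ else 0) - (l k)⁻¹ * (l m)⁻¹ / (∑ r, (l r)⁻¹)

lemma s_pos {K : ℕ} (hK : 2 ≤ K) (l : Fin K → ℝ) (hl : ∀ k, 0 < l k) :
    0 < ∑ r, (l r)⁻¹ := by
  have : Nonempty (Fin K) := ⟨⟨0, by omega⟩⟩
  exact Finset.sum_pos (fun r _ => inv_pos.mpr (hl r)) Finset.univ_nonempty

lemma row_sum_M {K : ℕ} (hK : 2 ≤ K) (l : Fin K → ℝ) (hl : ∀ k, 0 < l k) (k : Fin K) :
    ∑ m, Mmat l k m = 0 := by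
  have hs := (s_pos hK l hl).ne'
  simp only [Mmat, Finset.sum_sub_distrib, Finset.sum_ite_eq, Finset.mem_univ, if_true]
  rw [show ∑ m, (l k)⁻¹ * (l m)⁻¹ / (∑ r, (l r)⁻¹) =
      (l k)⁻¹ * (∑ m, (l m)⁻¹) / (∑ r, (l r)⁻¹) from by
    rw [← Finset.sum_div, ← Finset.mul_sum]]
  rw [mul_div_assoc, div_self hs, mul_one, sub_self]

lemma MD_apply {K : ℕ} (hK : 2 ≤ K) (l : Fin K → ℝ) (hl : ∀ k, 0 < l k) (k m : Fin K) :
    (Mmat l * Matrix.diagonal l) k m =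
      (if k = m then 1 else 0) - (l k)⁻¹ / (∑ r, (l r)⁻¹) := by
  rw [Matrix.mul_diagonal, Mmat]
  have hvm : (l m)⁻¹ * l m = 1 := inv_mul_cancel₀ (hl m).ne'
  show ((if k = m then (l k)⁻¹ else 0) - (l k)⁻¹ * (l m)⁻¹ / (∑ r, (l r)⁻¹)) * l m = _
  rw [sub_mul, div_mul_eq_mul_div, mul_assoc, hvm, mul_one]
  congr 1
  split_ifs with h
  · subst h; exact hvm
  · exact zero_mul _

lemma M_D_Rt {K : ℕ} (hK : 2 ≤ K) (l : Fin K → ℝ) (hl : ∀ k, 0 < l k) :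
    Mmat l * Matrix.diagonal l * (diffMatrix K)ᵀ = (diffMatrix K)ᵀ := by
  ext k i
  rw [Matrix.mul_apply]
  simp only [MD_apply hK l hl, sub_mul, ite_mul, one_mul, zero_mul, Finset.sum_sub_distrib,
    Finset.sum_ite_eq, Finset.mem_univ, if_true]
  rw [← Finset.mul_sum]
  have h0 : ∑ m, (diffMatrix K)ᵀ m i = 0 := by
    simpa [Matrix.transpose_apply] using diff_row_sum i
  rw [h0, mul_zero, sub_zero]

lemma N_eq_M {K : ℕ} (hK : 2 ≤ K) (l : Fin K → ℝ) (hl : ∀ k, 0 < l k) :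
    (diffMatrix K)ᵀ * (diffMatrix K * Matrix.diagonal l * (diffMatrix K)ᵀ)⁻¹ * diffMatrix K
      = Mmat l := by
  set R := diffMatrix K with hRdef
  set D := Matrix.diagonal l with hDdef
  set A := R * D * Rᵀ with hAdef
  set M := Mmat l with hMdef
  have hA1 : A * A⁻¹ = 1 := Matrix.mul_nonsing_inv _ (isUnit_A_det l hl)
  rw [Matrix.mul_assoc]
  set N := Rᵀ * (A⁻¹ * R) with hNdef
  have hMDRX : ∀ X : Matrix (Fin (K - 1)) (Fin K) ℝ, M * (D * (Rᵀ * X)) = Rᵀ * X := by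
    intro X
    rw [← Matrix.mul_assoc, ← Matrix.mul_assoc, M_D_Rt hK l hl]
  have hAY : ∀ Y : Matrix (Fin (K - 1)) (Fin K) ℝ, R * (D * (Rᵀ * Y)) = A * Y := by
    intro Y
    rw [← Matrix.mul_assoc, ← Matrix.mul_assoc, hAdef]
  set X := (1 : Matrix (Fin K) (Fin K) ℝ) - D * N with hXdef
  have hRX : R * X = 0 := by
    rw [hXdef, Matrix.mul_sub, Matrix.mul_one, hNdef, hAY, ← Matrix.mul_assoc, hA1,
      Matrix.one_mul, sub_self]
  have hconst : ∀ (j k k' : Fin K), X k j = X k' j := by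
    intro j k k'
    apply ker_const (fun m => X m j)
    intro i
    have h1 : (diffMatrix K).mulVec (fun m => X m j) i = (R * X) i j := by
      simp [Matrix.mulVec, Matrix.mul_apply, dotProduct, hRdef]
    have h2 := diff_mulVec (fun m => X m j) i
    rw [h1, hRX] at h2
    simp at h2
    linarith [h2]
  have hMX : M * X = 0 := by
    ext k j
    rw [Matrix.mul_apply]
    have k0 : Fin K := ⟨0, by omega⟩
    calc ∑ m, M k m * X m j = ∑ m, M k m * X ⟨0, by omega⟩ j := by
          apply Finset.sum_congr rfl
          intro m _
          rw [hconst j m ⟨0, by omega⟩]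
        _ = (∑ m, M k m) * X ⟨0, by omega⟩ j := by rw [Finset.sum_mul]
        _ = 0 := by rw [hMdef, row_sum_M hK l hl, zero_mul]
    
  have : M * (D * N) + M * X = M := by
    rw [← Matrix.mul_add, hXdef, add_sub_cancel, Matrix.mul_one]
  rw [← this, hMX, add_zero, hNdef, hMDRX]

end WaldAux

namespace WaldAux

lemma sum_pairs {K : ℕ} (hK : 2 ≤ K) (l : Fin K → ℝ) (hl : ∀ k, 0 < l k) (θ : Fin K → ℝ) :
    ∑ p ∈ Finset.univ.filter (fun p : Fin K × Fin K => p.1 < p.2),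
        (θ p.1 - θ p.2) ^ 2 * (((l p.1)⁻¹ * (l p.2)⁻¹) / (∑ k, (l k)⁻¹)) =
      (∑ k, (l k)⁻¹ * θ k ^ 2) - (∑ k, (l k)⁻¹ * θ k) ^ 2 / (∑ k, (l k)⁻¹) := by
  have hs := (s_pos hK l hl).ne'
  set v : Fin K → ℝ := fun k => (l k)⁻¹ with hv
  set s : ℝ := ∑ k, (l k)⁻¹ with hsdef
  set F : Fin K × Fin K → ℝ := fun p => (θ p.1 - θ p.2) ^ 2 * (v p.1 * v p.2 / s) with hF
  set B : ℝ := ∑ k, (l k)⁻¹ * θ k with hB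
  set C : ℝ := ∑ k, (l k)⁻¹ * θ k ^ 2 with hC
  have hgoal : ∑ p ∈ Finset.univ.filter (fun p : Fin K × Fin K => p.1 < p.2),
      (θ p.1 - θ p.2) ^ 2 * (((l p.1)⁻¹ * (l p.2)⁻¹) / s) =
      ∑ p ∈ Finset.univ.filter (fun p : Fin K × Fin K => p.1 < p.2), F p :=
    Finset.sum_congr rfl (fun p _ => rfl)
  rw [hgoal]
  -- swap
  have hswap : ∑ p ∈ Finset.univ.filter (fun p : Fin K × Fin K => p.2 < p.1), F p =
      ∑ p ∈ Finset.univ.filter (fun p : Fin K × Fin K => p.1 < p.2), F p := by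
    apply Finset.sum_nbij' (i := Prod.swap) (j := Prod.swap)
    · intro p hp; simp only [Finset.mem_filter, Finset.mem_univ, true_and] at *; exact hp
    · intro p hp; simp only [Finset.mem_filter, Finset.mem_univ, true_and] at *; exact hp
    · intro p _; simp
    · intro p _; simp
    · intro p _; simp only [hF, Prod.fst_swap, Prod.snd_swap]; ring
  -- diagonal is zero
  have hdiag : ∑ p ∈ Finset.univ.filter (fun p : Fin K × Fin K => ¬ p.1 < p.2 ∧ ¬ p.2 < p.1),
      F p = 0 := by
    apply Finset.sum_eq_zero
    intro p hp
    simp only [Finset.mem_filter, Finset.mem_univ, true_and] at hp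
    have h12 : p.1 = p.2 := le_antisymm (not_lt.mp hp.2) (not_lt.mp hp.1)
    simp [hF, h12]
  -- decompose
  have hsplit : ∑ p : Fin K × Fin K, F p =
      (∑ p ∈ Finset.univ.filter (fun p : Fin K × Fin K => p.1 < p.2), F p) +
      ((∑ p ∈ (Finset.univ.filter (fun p : Fin K × Fin K => ¬ p.1 < p.2)).filter
          (fun p => p.2 < p.1), F p) +
       (∑ p ∈ (Finset.univ.filter (fun p : Fin K × Fin K => ¬ p.1 < p.2)).filter
          (fun p => ¬ p.2 < p.1), F p)) := by
    rw [Finset.sum_filter_add_sum_filter_not (Finset.univ.filter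
        (fun p : Fin K × Fin K => ¬ p.1 < p.2)) (fun p => p.2 < p.1) F,
      Finset.sum_filter_add_sum_filter_not]
  have e1 : (Finset.univ.filter (fun p : Fin K × Fin K => ¬ p.1 < p.2)).filter
      (fun p => p.2 < p.1) = Finset.univ.filter (fun p : Fin K × Fin K => p.2 < p.1) := by
    ext p
    simp only [Finset.mem_filter, Finset.mem_univ, true_and]
    constructor
    · exact fun h => h.2
    · exact fun h => ⟨asymm h, h⟩
  have e2 : (Finset.univ.filter (fun p : Fin K × Fin K => ¬ p.1 < p.2)).filter
      (fun p => ¬ p.2 < p.1) = Finset.univ.filter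
      (fun p : Fin K × Fin K => ¬ p.1 < p.2 ∧ ¬ p.2 < p.1) := by
    ext p
    simp [Finset.mem_filter, and_assoc]
  rw [e1, e2, hswap, hdiag, add_zero] at hsplit
  -- total sum
  have htot : ∑ p : Fin K × Fin K, F p = 2 * (C - B ^ 2 / s) := by
    rw [Fintype.sum_prod_type]
    have hinner : ∀ k, ∑ m, F (k, m) =
        ((θ k ^ 2 * v k) * s + v k * C - (2 * θ k * v k) * B) / s := by
      intro k
      calc ∑ m, F (k, m) = (∑ m, (θ k - θ m) ^ 2 * (v k * v m)) / s := by
            rw [Finset.sum_div]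
            exact Finset.sum_congr rfl (fun m _ => by rw [mul_div_assoc])
        _ = ((θ k ^ 2 * v k) * s + v k * C - (2 * θ k * v k) * B) / s := by
            congr 1
            have expand : ∀ m : Fin K, (θ k - θ m) ^ 2 * (v k * v m) =
                (θ k ^ 2 * v k) * v m + v k * (v m * θ m ^ 2) - (2 * θ k * v k) * (v m * θ m) :=
              fun m => by ring
            rw [Finset.sum_congr rfl (fun m _ => expand m), Finset.sum_sub_distrib,
              Finset.sum_add_distrib, ← Finset.mul_sum, ← Finset.mul_sum, ← Finset.mul_sum]
    rw [Finset.sum_congr rfl (fun k _ => hinner k), ← Finset.sum_div, Finset.sum_sub_distrib,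
      Finset.sum_add_distrib, ← Finset.sum_mul, ← Finset.sum_mul, ← Finset.sum_mul]
    have h1 : ∑ k, θ k ^ 2 * v k = C := Finset.sum_congr rfl (fun k _ => by rw [mul_comm])
    have h2 : ∑ k, v k = s := rfl
    have h3 : ∑ k, 2 * θ k * v k = 2 * B := by
      rw [hB, Finset.mul_sum]
      exact Finset.sum_congr rfl (fun k _ => by ring)
    rw [h1, h2, h3]
    field_simp
    ring
  rw [htot] at hsplit
  linarith [hsplit]

end WaldAux

namespace WaldAux

lemma quad {K : ℕ} (hK : 2 ≤ K) (l : Fin K → ℝ) (hl : ∀ k, 0 < l k) (θ : Fin K → ℝ) :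
    θ ⬝ᵥ (Mmat l).mulVec θ =
      (∑ k, (l k)⁻¹ * θ k ^ 2) - (∑ k, (l k)⁻¹ * θ k) ^ 2 / (∑ k, (l k)⁻¹) := by
  have hs := (s_pos hK l hl).ne'
  have hinner : ∀ k, (Mmat l).mulVec θ k =
      (l k)⁻¹ * θ k - (l k)⁻¹ * (∑ m, (l m)⁻¹ * θ m) / (∑ r, (l r)⁻¹) := by
    intro k
    show ∑ m, Mmat l k m * θ m = _
    simp only [Mmat, sub_mul, ite_mul, zero_mul, Finset.sum_sub_distrib,
      Finset.sum_ite_eq, Finset.mem_univ, if_true]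
    congr 1
    rw [Finset.sum_congr rfl (fun m _ => show (l k)⁻¹ * (l m)⁻¹ / (∑ r, (l r)⁻¹) * θ m =
        ((l k)⁻¹ / (∑ r, (l r)⁻¹)) * ((l m)⁻¹ * θ m) from by ring), ← Finset.mul_sum,
      div_mul_eq_mul_div]
  show ∑ k, θ k * (Mmat l).mulVec θ k = _
  rw [Finset.sum_congr rfl (fun k _ => by rw [hinner k])]
  simp only [mul_sub, Finset.sum_sub_distrib]
  congr 1
  · exact Finset.sum_congr rfl (fun k _ => by ring)
  · rw [Finset.sum_congr rfl (fun k _ => show θ k * ((l k)⁻¹ * (∑ m, (l m)⁻¹ * θ m) /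
        (∑ r, (l r)⁻¹)) = ((l k)⁻¹ * θ k) * ((∑ m, (l m)⁻¹ * θ m) / (∑ r, (l r)⁻¹)) from by
      ring), ← Finset.sum_mul]
    rw [pow_two, mul_div_assoc]

end WaldAux


/-- The Wald quadratic form `θᵀ Rᵀ (R Λ Rᵀ)⁻¹ R θ` is a weighted sum of squared pairwise
differences. -/
theorem wald_quadratic_form (K : ℕ) (hK : 2 ≤ K) (l : Fin K → ℝ) (hl : ∀ k, 0 < l k)
    (θ : Fin K → ℝ) :
    let R := diffMatrix K
    let Λ := Matrix.diagonal l
    θ ⬝ᵥ (Rᵀ * (R * Λ * Rᵀ)⁻¹ * R).mulVec θ =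
      ∑ p ∈ Finset.univ.filter (fun p : Fin K × Fin K => p.1 < p.2),
        (θ p.1 - θ p.2) ^ 2 * (((l p.1)⁻¹ * (l p.2)⁻¹) / (∑ k, (l k)⁻¹)) := by
  intro R Λ
  show θ ⬝ᵥ ((diffMatrix K)ᵀ * (diffMatrix K * Matrix.diagonal l * (diffMatrix K)ᵀ)⁻¹ *
      diffMatrix K).mulVec θ = _
  rw [WaldAux.N_eq_M hK l hl, WaldAux.quad hK l hl θ, ← WaldAux.sum_pairs hK l hl θ]
end

section
/- In the special case $\Lambda = n^{-1} I_K$ for $n > 0$, for any $\theta \in \mathbb{R}^K$ we have $n\,\theta^\top R_K^\top (R_K R_K^\top)^{-1} R_K \theta = \frac{n}{K}\sum_{1\leq k_1 < k_2 \leq K}(\theta_{k_1}-\theta_{k_2})^2$, where $R_K$ is the $(K-1)\times K$ successive-differences matrix. -/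
/-!
`Rᵀ (R Rᵀ)⁻¹ R` is the orthogonal projection onto the row space of `R`. Since `R` has a right
inverse (the upper-triangular matrix of ones), `R Rᵀ` is invertible; since the kernel of `R` consists
of the constant vectors, the projection is the centering matrix `I - K⁻¹ J`. Finally
`θᵀ (I - K⁻¹ J) θ = ∑ θᵢ² - K⁻¹ (∑ θᵢ)² = K⁻¹ ∑_{i<j} (θᵢ - θⱼ)²` (Lagrange's identity).
-/

open Matrix Finset

namespace Matrix

variable {m n R : Type*} [Fintype m] [DecidableEq m] [Fintype n]

theorem isSymm_transpose_mul_inv_mul [CommRing R] (A : Matrix m n R) :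
    (Aᵀ * (A * Aᵀ)⁻¹ * A).IsSymm := by
  rw [IsSymm, transpose_mul, transpose_mul, transpose_nonsing_inv, transpose_mul,
    transpose_transpose, Matrix.mul_assoc]

theorem mul_transpose_mul_inv_mul [CommRing R] {A : Matrix m n R} (hA : IsUnit (A * Aᵀ).det) :
    A * (Aᵀ * (A * Aᵀ)⁻¹ * A) = A := by
  rw [← Matrix.mul_assoc, ← Matrix.mul_assoc, mul_nonsing_inv _ hA, Matrix.one_mul]

theorem isUnit_det_mul_transpose_of_mul_eq_one [Field R] [LinearOrder R] [IsStrictOrderedRing R]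
    {A : Matrix m n R} {S : Matrix n m R} (h : A * S = 1) : IsUnit (A * Aᵀ).det := by
  have hinj : Function.Injective Aᵀ.mulVec := fun x y hxy => by
    simpa [mulVec_mulVec, ← transpose_mul, h] using congrArg (Sᵀ *ᵥ ·) hxy
  rwa [← coe_mulVecLin, ← LinearMap.ker_eq_bot, ← ker_mulVecLin_transpose_mul_self Aᵀ,
    transpose_transpose, LinearMap.ker_eq_bot, coe_mulVecLin, mulVec_injective_iff_isUnit,
    isUnit_iff_isUnit_det] at hinj

end Matrix

section DiffMatrix

variable {K : ℕ}

theorem diffMatrix_mulVec_apply (θ : Fin K → ℝ) (i : Fin (K - 1)) :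
    (diffMatrix K *ᵥ θ) i = θ ⟨i, by omega⟩ - θ ⟨i + 1, by omega⟩ := by
  have hterm : ∀ j, diffMatrix K i j * θ j =
      (if ⟨i, by omega⟩ = j then θ j else 0) - (if ⟨i + 1, by omega⟩ = j then θ j else 0) := by
    intro j
    simp only [diffMatrix, Fin.ext_iff]
    split_ifs <;> first | omega | simp
  simp only [mulVec, dotProduct, hterm, sum_sub_distrib, sum_ite_eq, mem_univ, if_true]

theorem diffMatrix_mul_apply {α : Type*} (M : Matrix (Fin K) α ℝ) (i : Fin (K - 1)) (k : α) :
    (diffMatrix K * M) i k = M ⟨i, by omega⟩ k - M ⟨i + 1, by omega⟩ k :=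
  diffMatrix_mulVec_apply (fun j => M j k) i

theorem diffMatrix_mulVec_one : diffMatrix K *ᵥ 1 = 0 := by
  ext i
  simp [diffMatrix_mulVec_apply]

theorem diffMatrix_mul_upperOnes :
    diffMatrix K * of (fun (j : Fin K) (k : Fin (K - 1)) => if j.val ≤ k.val then (1 : ℝ) else 0)
      = 1 := by
  ext i k
  simp only [diffMatrix_mul_apply, of_apply, one_apply, Fin.ext_iff]
  split_ifs <;> first | omega | norm_num

theorem isUnit_det_diffMatrix_mul_transpose : IsUnit (diffMatrix K * (diffMatrix K)ᵀ).det :=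
  isUnit_det_mul_transpose_of_mul_eq_one diffMatrix_mul_upperOnes

theorem eq_of_diffMatrix_mulVec_eq_zero {θ : Fin K → ℝ} (h : diffMatrix K *ᵥ θ = 0) (j : Fin K) :
    θ j = θ ⟨0, j.pos⟩ := by
  obtain ⟨j, hj⟩ := j
  induction j with
  | zero => rfl
  | succ j ih =>
    have hstep := congrFun h ⟨j, by omega⟩
    rw [diffMatrix_mulVec_apply, Pi.zero_apply, sub_eq_zero] at hstep
    rw [← hstep, ih]

end DiffMatrix

noncomputable def centeringMatrix (K : ℕ) : Matrix (Fin K) (Fin K) ℝ :=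
  1 - (K : ℝ)⁻¹ • of fun _ _ => 1

section Centering

variable {K : ℕ}

theorem isSymm_centeringMatrix : (centeringMatrix K).IsSymm := by
  rw [IsSymm, centeringMatrix, transpose_sub, transpose_one, transpose_smul]
  rfl

theorem centeringMatrix_mulVec (θ : Fin K → ℝ) :
    centeringMatrix K *ᵥ θ = θ - fun _ => (K : ℝ)⁻¹ * ∑ j, θ j := by
  rw [centeringMatrix, sub_mulVec, one_mulVec, smul_mulVec]
  ext i
  simp [mulVec, dotProduct]

theorem centeringMatrix_mulVec_one : centeringMatrix K *ᵥ 1 = 0 := by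
  ext i
  have hK : (K : ℝ) ≠ 0 := Nat.cast_ne_zero.2 i.pos.ne'
  simp [centeringMatrix_mulVec, hK]

theorem diffMatrix_mul_centeringMatrix : diffMatrix K * centeringMatrix K = diffMatrix K := by
  rw [centeringMatrix, Matrix.mul_sub, Matrix.mul_one, Matrix.mul_smul, sub_eq_self, smul_eq_zero]
  right
  ext i k
  simp [diffMatrix_mul_apply]

end Centering

/-- The columns of `D` lie in the kernel of `diffMatrix K`, so they are constant; by symmetry `D`
is a constant matrix, and its zero row sums force the constant to vanish. -/
theorem eq_zero_of_diffMatrix_mul_eq_zero {K : ℕ} {D : Matrix (Fin K) (Fin K) ℝ} (hD : D.IsSymm)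
    (hRD : diffMatrix K * D = 0) (hD1 : D *ᵥ 1 = 0) : D = 0 := by
  have hcol : ∀ j k, D j k = D ⟨0, j.pos⟩ k := fun j k =>
    eq_of_diffMatrix_mulVec_eq_zero (θ := fun j => D j k)
      (funext fun i => congrFun (congrFun hRD i) k) j
  have hconst : ∀ j k, D j k = D ⟨0, j.pos⟩ ⟨0, j.pos⟩ := fun j k => by
    rw [hcol, ← hD.apply, hcol]
  ext j k
  have hrow := congrFun hD1 j
  have hK : (K : ℝ) ≠ 0 := Nat.cast_ne_zero.2 j.pos.ne'
  simp only [mulVec, dotProduct, Pi.one_apply, mul_one, Pi.zero_apply] at hrow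
  rw [sum_congr rfl fun k _ => hconst j k, sum_const, card_univ, Fintype.card_fin, nsmul_eq_mul,
    mul_eq_zero] at hrow
  rw [hconst, hrow.resolve_left hK, Matrix.zero_apply]

theorem transpose_mul_inv_mul_diffMatrix (K : ℕ) :
    (diffMatrix K)ᵀ * (diffMatrix K * (diffMatrix K)ᵀ)⁻¹ * diffMatrix K = centeringMatrix K := by
  symm
  rw [← sub_eq_zero]
  apply eq_zero_of_diffMatrix_mul_eq_zero
  · exact isSymm_centeringMatrix.sub (isSymm_transpose_mul_inv_mul _)
  · rw [Matrix.mul_sub, diffMatrix_mul_centeringMatrix,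
      mul_transpose_mul_inv_mul isUnit_det_diffMatrix_mul_transpose, sub_self]
  · rw [sub_mulVec, centeringMatrix_mulVec_one, ← mulVec_mulVec, diffMatrix_mulVec_one,
      mulVec_zero, sub_zero]

theorem two_mul_sum_filter_lt {ι R : Type*} [Fintype ι] [LinearOrder ι] [NonAssocSemiring R]
    (f : ι → ι → R) (hf : ∀ i j, f i j = f j i) (hdiag : ∀ i, f i i = 0) :
    2 * ∑ p ∈ univ.filter (fun p : ι × ι => p.1 < p.2), f p.1 p.2 = ∑ i, ∑ j, f i j := by
  have hsplit : ∀ i j, f i j = (if i < j then f i j else 0) + (if j < i then f j i else 0) := by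
    intro i j
    rcases lt_trichotomy i j with h | rfl | h
    · simp [h, h.not_gt]
    · simp [hdiag]
    · simp [h, h.not_gt, hf i j]
  calc 2 * ∑ p ∈ univ.filter (fun p : ι × ι => p.1 < p.2), f p.1 p.2
      = 2 * ∑ i, ∑ j, if i < j then f i j else 0 := by
        rw [sum_filter, Fintype.sum_prod_type]
    _ = ∑ i, ∑ j, ((if i < j then f i j else 0) + (if j < i then f j i else 0)) := by
        rw [two_mul]
        nth_rw 2 [sum_comm]
        simp only [sum_add_distrib]
    _ = ∑ i, ∑ j, f i j := by simp only [← hsplit]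

theorem sum_sum_sub_sq {K : ℕ} (θ : Fin K → ℝ) :
    ∑ i, ∑ j, (θ i - θ j) ^ 2 = 2 * (K * ∑ i, θ i ^ 2 - (∑ i, θ i) ^ 2) := by
  simp only [sub_sq, sum_add_distrib, sum_sub_distrib, ← mul_sum, ← sum_mul, sum_const, card_univ,
    Fintype.card_fin, nsmul_eq_mul]
  ring

theorem dotProduct_centeringMatrix_mulVec {K : ℕ} (θ : Fin K → ℝ) :
    θ ⬝ᵥ centeringMatrix K *ᵥ θ =
      (K : ℝ)⁻¹ * ∑ p ∈ univ.filter (fun p : Fin K × Fin K => p.1 < p.2), (θ p.1 - θ p.2) ^ 2 := by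
  rcases K.eq_zero_or_pos with rfl | hK
  · simp
  have hpairs := two_mul_sum_filter_lt (fun i j => (θ i - θ j) ^ 2) (fun i j => by ring)
    (fun i => by simp)
  rw [sum_sum_sub_sq] at hpairs
  rw [centeringMatrix_mulVec, dotProduct_sub, mul_left_cancel₀ two_ne_zero hpairs]
  simp only [dotProduct, ← sq, ← sum_mul]
  field_simp

theorem wald_quadratic_form_identity_case_general (K : ℕ) (n : ℝ)
    (θ : Fin K → ℝ) :
    let R := diffMatrix K
    n * (θ ⬝ᵥ (Rᵀ * (R * Rᵀ)⁻¹ * R).mulVec θ) =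
      n / (K : ℝ) *
        ∑ p ∈ Finset.univ.filter (fun p : Fin K × Fin K => p.1 < p.2),
          (θ p.1 - θ p.2) ^ 2 := by
  dsimp only
  rw [transpose_mul_inv_mul_diffMatrix, dotProduct_centeringMatrix_mulVec, div_eq_mul_inv,
    mul_assoc]

/-- With `Λ = n⁻¹ I`, the rescaled Wald quadratic form reduces to
`(n/K) ∑_{k₁<k₂} (θ_{k₁} - θ_{k₂})²`. -/
theorem wald_quadratic_form_identity_case (K : ℕ) (hK : 2 ≤ K) (n : ℝ) (hn : 0 < n)
    (θ : Fin K → ℝ) :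
    let R := diffMatrix K
    n * (θ ⬝ᵥ (Rᵀ * (R * Rᵀ)⁻¹ * R).mulVec θ) =
      n / (K : ℝ) *
        ∑ p ∈ Finset.univ.filter (fun p : Fin K × Fin K => p.1 < p.2),
          (θ p.1 - θ p.2) ^ 2 :=
  wald_quadratic_form_identity_case_general K n θ
end

section
/- Let $U$ and $V$ be random variables such that $\sup_{t}|P(U \leq t) - \Phi(t)| \leq a$ and $\mathbb{E}|U - V|^q \leq b^q$ for some $q > 0$ and constants $a, b > 0$. Then $\sup_t |P(V \leq t) - \Phi(t)| \leq a + b^{q/(q+1)}(1 + (2\pi)^{-1/2})$, where $\Phi$ is the standard normal CDF. -/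
open MeasureTheory ProbabilityTheory
open scoped NNReal

/-- The standard normal cumulative distribution function. -/
noncomputable def stdNormalCDF (x : ℝ) : ℝ :=
  ((ProbabilityTheory.gaussianReal 0 1) (Set.Iic x)).toReal

/-!
On the event `|U - V| ≤ ε` we have `{U ≤ t - ε} ⊆ {V ≤ t} ⊆ {U ≤ t + ε}`, so the CDF of `V` at `t`
is squeezed between those of `U` at `t ± ε`, up to `P(|U - V| > ε)`. The CDF of `U` is within `a`
of `Φ`, which moves by at most `ε / √(2π)` over an interval of length `ε`, and Markov's inequality
bounds `P(|U - V| > ε)` by `b^q / ε^q`. The choice `ε = b^{q/(q+1)}` balances the two errors: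
`b^q / ε^q = ε`.
-/

lemma gaussianPDFReal_le (μ : ℝ) (v : ℝ≥0) (x : ℝ) :
    gaussianPDFReal μ v x ≤ (√(2 * Real.pi * v))⁻¹ := by
  rw [gaussianPDFReal]
  refine mul_le_of_le_one_right (by positivity) (Real.exp_le_one_iff.2 ?_)
  exact div_nonpos_of_nonpos_of_nonneg (neg_nonpos.2 (sq_nonneg _)) (by positivity)

lemma gaussianReal_le_mul_volume (μ : ℝ) {v : ℝ≥0} (hv : v ≠ 0) (s : Set ℝ) :
    gaussianReal μ v s ≤ ENNReal.ofReal (√(2 * Real.pi * v))⁻¹ * volume s := by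
  rw [gaussianReal_apply μ hv, ← setLIntegral_const]
  exact lintegral_mono fun x => ENNReal.ofReal_le_ofReal (gaussianPDFReal_le μ v x)

lemma stdNormalCDF_sub_le {s t : ℝ} (hst : s ≤ t) :
    stdNormalCDF t - stdNormalCDF s ≤ (t - s) * (2 * Real.pi) ^ (-(1 : ℝ) / 2) := by
  have hc : (2 * Real.pi) ^ (-(1 : ℝ) / 2) = (√(2 * Real.pi * (1 : ℝ≥0)))⁻¹ := by
    rw [NNReal.coe_one, mul_one, Real.sqrt_eq_rpow, ← Real.rpow_neg (by positivity), neg_div]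
  have hIoc : (gaussianReal 0 1).real (Set.Ioc s t) ≤ (√(2 * Real.pi * (1 : ℝ≥0)))⁻¹ * (t - s) := by
    have h := gaussianReal_le_mul_volume 0 one_ne_zero (Set.Ioc s t)
    rw [Real.volume_Ioc, ← ENNReal.ofReal_mul (by positivity)] at h
    exact ENNReal.toReal_le_of_le_ofReal (by positivity) h
  have hsplit : stdNormalCDF t = stdNormalCDF s + (gaussianReal 0 1).real (Set.Ioc s t) := by
    rw [stdNormalCDF, stdNormalCDF, ← measureReal_def, ← measureReal_def,
      ← measureReal_union (Set.Iic_disjoint_Ioc le_rfl) measurableSet_Ioc,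
      Set.Iic_union_Ioc_eq_Iic hst]
  rw [hc]
  linarith

section Coupling

variable {Ω : Type*} [MeasurableSpace Ω] (P : Measure Ω) [IsFiniteMeasure P]

lemma measureReal_le_le_add_measureReal_lt_abs_sub (U V : Ω → ℝ) (t ε : ℝ) :
    P.real {ω | V ω ≤ t} ≤ P.real {ω | U ω ≤ t + ε} + P.real {ω | ε < |U ω - V ω|} := by
  have hsub : {ω | V ω ≤ t} ⊆ {ω | U ω ≤ t + ε} ∪ {ω | ε < |U ω - V ω|} := by
    intro ω hω
    by_contra h
    simp only [Set.mem_union, Set.mem_ofPred_eq, not_or, not_lt, not_le] at h hω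
    linarith [(abs_le.1 h.2).2]
  exact (measureReal_mono hsub).trans (measureReal_union_le _ _)

lemma abs_measureReal_le_sub_le_of_abs_sub (U V : Ω → ℝ) (F : ℝ → ℝ) {a δ ε η : ℝ}
    (hU : ∀ t, |P.real {ω | U ω ≤ t} - F t| ≤ a)
    (hF : ∀ s, F (s + ε) - F s ≤ η)
    (hδ : P.real {ω | ε < |U ω - V ω|} ≤ δ) (t : ℝ) :
    |P.real {ω | V ω ≤ t} - F t| ≤ a + δ + η := by
  have hupper := measureReal_le_le_add_measureReal_lt_abs_sub P U V t ε
  have hlower := measureReal_le_le_add_measureReal_lt_abs_sub P V U (t - ε) ε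
  simp only [sub_add_cancel, abs_sub_comm (V _)] at hlower
  have hFt := hF t
  have hFt' := hF (t - ε)
  rw [sub_add_cancel] at hFt'
  rw [abs_le]
  constructor <;> linarith [abs_le.1 (hU (t + ε)), abs_le.1 (hU (t - ε))]

lemma rpow_mul_measureReal_lt_abs_le_integral_rpow (f : Ω → ℝ) {q ε : ℝ} (hq : 0 ≤ q)
    (hε : 0 ≤ ε) (hf : Integrable (fun ω => |f ω| ^ q) P) :
    ε ^ q * P.real {ω | ε < |f ω|} ≤ ∫ ω, |f ω| ^ q ∂P := by
  have hsub : {ω | ε < |f ω|} ⊆ {ω | ε ^ q ≤ |f ω| ^ q} := fun ω hω =>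
    Real.rpow_le_rpow hε (le_of_lt hω) hq
  refine le_trans ?_ (mul_meas_ge_le_integral_of_nonneg
    (ae_of_all _ fun ω => Real.rpow_nonneg (abs_nonneg _) q) hf (ε ^ q))
  exact mul_le_mul_of_nonneg_left (measureReal_mono hsub) (by positivity)

lemma measureReal_lt_abs_le_of_integral_rpow_le (f : Ω → ℝ) {q b : ℝ} (hq : 0 < q) (hb : 0 < b)
    (hf : Integrable (fun ω => |f ω| ^ q) P) (hmom : ∫ ω, |f ω| ^ q ∂P ≤ b ^ q) :
    P.real {ω | b ^ (q / (q + 1)) < |f ω|} ≤ b ^ (q / (q + 1)) := by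
  set ε := b ^ (q / (q + 1))
  have hε : 0 < ε := Real.rpow_pos_of_pos hb _
  have hbq : b ^ q = ε ^ q * ε := by
    rw [← Real.rpow_mul hb.le, ← Real.rpow_add hb]
    congr 1
    field_simp
  have h := (rpow_mul_measureReal_lt_abs_le_integral_rpow P f hq.le hε.le hf).trans hmom
  rw [hbq] at h
  exact le_of_mul_le_mul_left h (Real.rpow_pos_of_pos hε q)

end Coupling

theorem ks_perturbation_bound_general {Ω : Type*} [MeasurableSpace Ω] (P : Measure Ω)
    [IsProbabilityMeasure P]
    (U V : Ω → ℝ)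
    (q a b : ℝ) (hq : 0 < q) (hb : 0 < b)
    (hKS : ∀ t : ℝ, |(P {ω | U ω ≤ t}).toReal - stdNormalCDF t| ≤ a)
    (hint : Integrable (fun ω => |U ω - V ω| ^ q) P)
    (hmom : ∫ ω, |U ω - V ω| ^ q ∂P ≤ b ^ q) :
    ∀ t : ℝ, |(P {ω | V ω ≤ t}).toReal - stdNormalCDF t| ≤
      a + b ^ (q / (q + 1)) * (1 + (2 * Real.pi) ^ (-(1 : ℝ) / 2)) := by
  intro t
  set ε := b ^ (q / (q + 1))
  have hε : 0 < ε := Real.rpow_pos_of_pos hb _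
  have hΦ : ∀ s, stdNormalCDF (s + ε) - stdNormalCDF s ≤ ε * (2 * Real.pi) ^ (-(1 : ℝ) / 2) :=
    fun s => by simpa using stdNormalCDF_sub_le (le_add_of_nonneg_right hε.le)
  have hmarkov := measureReal_lt_abs_le_of_integral_rpow_le P (fun ω => U ω - V ω) hq hb hint hmom
  calc |P.real {ω | V ω ≤ t} - stdNormalCDF t|
      ≤ a + ε + ε * (2 * Real.pi) ^ (-(1 : ℝ) / 2) :=
        abs_measureReal_le_sub_le_of_abs_sub P U V stdNormalCDF hKS hΦ hmarkov t
    _ = a + ε * (1 + (2 * Real.pi) ^ (-(1 : ℝ) / 2)) := by ring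

/-- Kolmogorov–Smirnov perturbation bound: if `U` is within `a` of standard normal in Kolmogorov
distance and `𝔼|U - V|^q ≤ b^q`, then `V` is within `a + b^{q/(q+1)} (1 + (2π)^{-1/2})` of
standard normal. -/
theorem ks_perturbation_bound {Ω : Type*} [MeasurableSpace Ω] (P : Measure Ω)
    [IsProbabilityMeasure P]
    (U V : Ω → ℝ) (hU : Measurable U) (hV : Measurable V)
    (q a b : ℝ) (hq : 0 < q) (ha : 0 < a) (hb : 0 < b)
    (hKS : ∀ t : ℝ, |(P {ω | U ω ≤ t}).toReal - stdNormalCDF t| ≤ a)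
    (hint : Integrable (fun ω => |U ω - V ω| ^ q) P)
    (hmom : ∫ ω, |U ω - V ω| ^ q ∂P ≤ b ^ q) :
    ∀ t : ℝ, |(P {ω | V ω ≤ t}).toReal - stdNormalCDF t| ≤
      a + b ^ (q / (q + 1)) * (1 + (2 * Real.pi) ^ (-(1 : ℝ) / 2)) :=
  ks_perturbation_bound_general P U V q a b hq hb hKS hint hmom
end
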